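/- arXiv:1801.03879 — 2 statements merged into one kernel-verified Lean document; each statement's English description precedes it below -/
import Mathlib

section
/- Define T(i,j) as: T(1,j)=K_1 and T(i,j) is j+1 disjoint copies of T(i-1,j) plus a universal vertex. Then for all i > 0, j ≥ 0, T(i,j) does not admit an (i-1,j)-coloring, i.e., there is no partition of its vertices into i-1 classes each inducing a subgraph of maximum degree at most j. -/
/-- A `(C, D)`-coloring of `G`: a partition of the vertices into `C` classes such that every
vertex has at most `D` neighbors in its own class. -/
def HasDefectiveColoring {V : Type} (G : SimpleGraph V) (C D : ℕ) : Prop :=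
  ∃ f : V → Fin C, ∀ v : V, {u | G.Adj v u ∧ f u = f v}.ncard ≤ D

/-- Vertex type of the graph `T(n+1, j)` of the paper. -/
def TV : ℕ → ℕ → Type
  | 0, _ => Unit
  | n + 1, j => Option (Fin (j + 1) × TV n j)

/-- The graph `T(n+1, j)`: `Tgraph 0 j = K₁`; `Tgraph (n+1) j` is `j+1` disjoint copies of
`Tgraph n j` together with a universal vertex. -/
def Tgraph : (n : ℕ) → (j : ℕ) → SimpleGraph (TV n j)
  | 0, _ => ⊥
  | n + 1, j => SimpleGraph.fromRel (fun a b =>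
      match a, b with
      | none, _ => True
      | some _, none => False
      | some p, some q => p.1 = q.1 ∧ (Tgraph n j).Adj p.2 q.2)

/-!
Induction on `n`. In a `(n+1, j)`-coloring of `T(n+2, j)` the universal vertex has at most `j`
neighbors of its own color, so one of the `j+1` copies of `T(n+1, j)` avoids that color
entirely; that copy is then `(n, j)`-colored by the remaining `n` colors.
-/

instance TV.finite : (n j : ℕ) → Finite (TV n j)
  | 0, _ => inferInstanceAs (Finite Unit)
  | n + 1, j =>
    haveI := TV.finite n j
    inferInstanceAs (Finite (Option (Fin (j + 1) × TV n j)))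

section DefectiveColoring

variable {V W : Type} {H : SimpleGraph V} {G : SimpleGraph W}

lemma ncard_adj_sameColor_le_of_injective [Finite W] (φ : H →g G) (hφ : Function.Injective φ)
    {α : Type} (f : W → α) (v : V) :
    {u | H.Adj v u ∧ f (φ u) = f (φ v)}.ncard ≤ {w | G.Adj (φ v) w ∧ f w = f (φ v)}.ncard :=
  Set.ncard_le_ncard_of_injOn φ (fun _ hu => ⟨φ.map_adj hu.1, hu.2⟩) hφ.injOn

lemma HasDefectiveColoring.of_injective_hom_of_forall_ne [Finite W] {C D : ℕ} (φ : H →g G)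
    (hφ : Function.Injective φ) (f : W → Fin (C + 1))
    (hf : ∀ w, {u | G.Adj w u ∧ f u = f w}.ncard ≤ D) (c : Fin (C + 1))
    (hc : ∀ v, f (φ v) ≠ c) : HasDefectiveColoring H C D := by
  let g : V → Fin C := fun v => (finSuccAboveEquiv c).symm ⟨f (φ v), hc v⟩
  have hg : ∀ u v, g u = g v ↔ f (φ u) = f (φ v) := fun u v => by
    simp only [g, (finSuccAboveEquiv c).symm.injective.eq_iff, Subtype.mk.injEq]
  refine ⟨g, fun v => ?_⟩
  simp only [hg]
  exact (ncard_adj_sameColor_le_of_injective φ hφ f v).trans (hf (φ v))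

end DefectiveColoring

namespace Tgraph

variable {n j : ℕ}

lemma adj_none_some (x : Fin (j + 1) × TV n j) :
    (Tgraph (n + 1) j).Adj (none : TV (n + 1) j) (some x) :=
  (SimpleGraph.fromRel_adj ..).2 ⟨(Option.some_ne_none x).symm, Or.inl trivial⟩

lemma adj_some_some (p q : Fin (j + 1) × TV n j) :
    (Tgraph (n + 1) j).Adj (some p : TV (n + 1) j) (some q) ↔
      p.1 = q.1 ∧ (Tgraph n j).Adj p.2 q.2 := by
  refine (SimpleGraph.fromRel_adj ..).trans ⟨?_, fun h => ⟨?_, Or.inl h⟩⟩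
  · rintro ⟨-, h | ⟨h₁, h₂⟩⟩
    · exact h
    · exact ⟨h₁.symm, h₂.symm⟩
  · rintro hpq
    cases Option.some_injective _ hpq
    exact (Tgraph n j).loopless.irrefl _ h.2

def copy (k : Fin (j + 1)) : Tgraph n j →g Tgraph (n + 1) j where
  toFun t := some (k, t)
  map_rel' h := (adj_some_some _ _).2 ⟨rfl, h⟩

lemma copy_injective (k : Fin (j + 1)) : Function.Injective (copy (n := n) k) :=
  fun _ _ h => (Prod.ext_iff.1 (Option.some_injective _ h)).2

lemma exists_copy_forall_color_ne {α : Type} (f : TV (n + 1) j → α)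
    (hf : {u | (Tgraph (n + 1) j).Adj none u ∧ f u = f none}.ncard ≤ j) :
    ∃ k : Fin (j + 1), ∀ t, f (copy k t) ≠ f none := by
  by_contra! h
  choose t ht using h
  have hcard : (Set.univ : Set (Fin (j + 1))).ncard ≤
      {u | (Tgraph (n + 1) j).Adj none u ∧ f u = f none}.ncard :=
    Set.ncard_le_ncard_of_injOn (fun k => copy k (t k)) (fun k _ => ⟨adj_none_some _, ht k⟩)
      (fun _ _ _ _ h => congrArg Prod.fst (Option.some_injective _ h))
  rw [Set.ncard_univ, Nat.card_eq_fintype_card, Fintype.card_fin] at hcard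
  omega

end Tgraph

/-- `T(i, j)` admits no `(i-1, j)`-coloring (here `i = n + 1`). -/
theorem Tgraph_not_defectiveColorable (n j : ℕ) :
    ¬ HasDefectiveColoring (Tgraph n j) n j := by
  induction n with
  | zero =>
    rintro ⟨f, -⟩
    exact (f ()).elim0
  | succ n ih =>
    rintro ⟨f, hf⟩
    obtain ⟨k, hk⟩ := Tgraph.exists_copy_forall_color_ne f (hf none)
    exact ih <| .of_injective_hom_of_forall_ne (Tgraph.copy k) (Tgraph.copy_injective k) f hf _ hk
end

section
/- Define T(i,j) as: T(1,j)=K_1 and T(i,j) is j+1 disjoint copies of T(i-1,j) plus a universal vertex. Then the tree-depth of T(i,j) equals i. -/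
/-- The tree-depth of a graph `G`: the minimum height of a rooted forest whose closure
contains `G` as a subgraph. -/
noncomputable def treeDepth {V : Type} (G : SimpleGraph V) : ℕ :=
  sInf {h : ℕ | ∃ lt : V → V → Prop, IsStrictOrder V lt ∧
    (∀ v : V, IsChain lt {u | lt u v}) ∧
    (∀ u v : V, G.Adj u v → lt u v ∨ lt v u) ∧
    (∀ s : Finset V, IsChain lt (↑s : Set V) → s.card ≤ h)}

/-!
Tree-depth is at least the clique number, and `T(i, j)` contains an `i`-clique: the path from
the universal vertex down through the first copy at every level. Conversely, `T(i, j)` is a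
subgraph of the closure of the rooted forest in which each universal vertex is the parent of the
universal vertices of its copies, and that forest has height `i`.
-/

open SimpleGraph

theorem IsChain.card_le_of_rank {α : Type*} {r : α → α → Prop} {k : ℕ} (rank : α → Fin k)
    (hrank : ∀ a b, r a b → rank a < rank b) {t : Finset α} (ht : IsChain r (t : Set α)) :
    t.card ≤ k := by
  have hinj : Set.InjOn rank t := by
    intro a ha b hb hab
    by_contra hne
    rcases ht ha hb hne with h | h
    · exact (hrank a b h).ne hab
    · exact (hrank b a h).ne' hab
  simpa using Finset.card_le_card_of_injOn rank (fun _ _ => Finset.mem_univ _) hinj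

theorem treeDepth_eq_of_isNClique {V : Type} {G : SimpleGraph V} {k : ℕ} {s : Finset V}
    (hs : G.IsNClique k s) (lt : V → V → Prop) [IsStrictOrder V lt]
    (hdown : ∀ v, IsChain lt {u | lt u v}) (hadj : ∀ u v, G.Adj u v → lt u v ∨ lt v u)
    (hheight : ∀ t : Finset V, IsChain lt (t : Set V) → t.card ≤ k) :
    treeDepth G = k := by
  have hk : k ∈ {h : ℕ | ∃ lt : V → V → Prop, IsStrictOrder V lt ∧
      (∀ v : V, IsChain lt {u | lt u v}) ∧
      (∀ u v : V, G.Adj u v → lt u v ∨ lt v u) ∧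
      (∀ s : Finset V, IsChain lt (↑s : Set V) → s.card ≤ h)} :=
    ⟨lt, inferInstance, hdown, hadj, hheight⟩
  refine le_antisymm (Nat.sInf_le hk) (le_csInf ⟨k, hk⟩ ?_)
  rintro h ⟨lt', -, -, hadj', hbound⟩
  rw [← hs.card_eq]
  exact hbound s fun a ha b hb hab => hadj' a b (hs.isClique ha hb hab)

section Tgraph

variable {n j : ℕ}

@[simp]
theorem Tgraph_succ_adj_none_none : ¬(Tgraph (n + 1) j).Adj none none :=
  (Tgraph (n + 1) j).irrefl

@[simp]
theorem Tgraph_succ_adj_none_some (p : Fin (j + 1) × TV n j) :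
    (Tgraph (n + 1) j).Adj none (some p) :=
  ⟨Option.some_ne_none p ∘ Eq.symm, Or.inl trivial⟩

@[simp]
theorem Tgraph_succ_adj_some_none (p : Fin (j + 1) × TV n j) :
    (Tgraph (n + 1) j).Adj (some p) none :=
  (Tgraph_succ_adj_none_some p).symm

@[simp]
theorem Tgraph_succ_adj_some_some (p q : Fin (j + 1) × TV n j) :
    (Tgraph (n + 1) j).Adj (some p) (some q) ↔ p.1 = q.1 ∧ (Tgraph n j).Adj p.2 q.2 := by
  refine ⟨fun ⟨_, h⟩ => h.elim id fun h => ⟨h.1.symm, h.2.symm⟩, fun h => ⟨?_, Or.inl h⟩⟩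
  exact fun hpq => h.2.ne (congrArg Prod.snd (Option.some.inj hpq))

end Tgraph

namespace TV

def IsAncestor : (n j : ℕ) → TV n j → TV n j → Prop
  | 0, _, _, _ => False
  | _ + 1, _, none, some _ => True
  | n + 1, j, some p, some q => p.1 = q.1 ∧ IsAncestor n j p.2 q.2
  | _ + 1, _, _, none => False

def depth : (n j : ℕ) → TV n j → Fin (n + 1)
  | 0, _, _ => 0
  | _ + 1, _, none => 0
  | n + 1, j, some p => (depth n j p.2).succ

theorem not_isAncestor_none (n j : ℕ) : ∀ a : TV (n + 1) j, ¬IsAncestor (n + 1) j a none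
  | none, h => h
  | some _, h => h

theorem isAncestor_irrefl : ∀ (n j : ℕ) (a : TV n j), ¬IsAncestor n j a a
  | 0, _, _, h => h
  | _ + 1, _, none, h => h
  | n + 1, j, some p, h => isAncestor_irrefl n j p.2 h.2

theorem isAncestor_trans : ∀ (n j : ℕ) (a b c : TV n j),
    IsAncestor n j a b → IsAncestor n j b c → IsAncestor n j a c
  | 0, _, _, _, _, h, _ => h.elim
  | _ + 1, _, none, some _, some _, _, _ => trivial
  | n + 1, j, some p, some q, some r, hpq, hqr =>
      ⟨hpq.1.trans hqr.1, isAncestor_trans n j p.2 q.2 r.2 hpq.2 hqr.2⟩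
  | n + 1, j, _, b, none, _, h => (not_isAncestor_none n j b h).elim
  | n + 1, j, a, none, some _, h, _ => (not_isAncestor_none n j a h).elim

instance (n j : ℕ) : IsStrictOrder (TV n j) (IsAncestor n j) where
  irrefl := isAncestor_irrefl n j
  trans := isAncestor_trans n j

theorem depth_lt_depth : ∀ (n j : ℕ) (a b : TV n j), IsAncestor n j a b →
    depth n j a < depth n j b
  | 0, _, _, _, h => h.elim
  | _ + 1, _, none, some _, _ => Fin.succ_pos _
  | n + 1, j, some p, some q, h => Fin.succ_lt_succ_iff.mpr (depth_lt_depth n j p.2 q.2 h.2)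
  | n + 1, j, a, none, h => (not_isAncestor_none n j a h).elim

theorem isChain_ancestors : ∀ (n j : ℕ) (v : TV n j),
    IsChain (IsAncestor n j) {u | IsAncestor n j u v}
  | 0, _, _ => fun _ h => h.elim
  | n + 1, j, none => fun a ha => (not_isAncestor_none n j a ha).elim
  | n + 1, j, some r => by
      rintro (_ | p) hp (_ | q) hq hpq
      · exact (hpq rfl).elim
      · exact Or.inl trivial
      · exact Or.inr trivial
      · obtain ⟨hpr, hp⟩ : p.1 = r.1 ∧ IsAncestor n j p.2 r.2 := hp
        obtain ⟨hqr, hq⟩ : q.1 = r.1 ∧ IsAncestor n j q.2 r.2 := hq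
        have hne : p.2 ≠ q.2 := fun h => hpq (congrArg some (Prod.ext (hpr.trans hqr.symm) h))
        rcases isChain_ancestors n j r.2 hp hq hne with h | h
        · exact Or.inl ⟨hpr.trans hqr.symm, h⟩
        · exact Or.inr ⟨hqr.trans hpr.symm, h⟩

theorem isAncestor_or_isAncestor_of_adj : ∀ (n j : ℕ) (a b : TV n j), (Tgraph n j).Adj a b →
    IsAncestor n j a b ∨ IsAncestor n j b a
  | 0, _, _, _, h => h.elim
  | _ + 1, _, none, none, h => (Tgraph_succ_adj_none_none h).elim
  | _ + 1, _, none, some _, _ => Or.inl trivial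
  | _ + 1, _, some _, none, _ => Or.inr trivial
  | n + 1, j, some p, some q, h => by
      obtain ⟨hpq, hadj⟩ := (Tgraph_succ_adj_some_some p q).mp h
      exact (isAncestor_or_isAncestor_of_adj n j p.2 q.2 hadj).imp (⟨hpq, ·⟩) (⟨hpq.symm, ·⟩)

def spine : (n j : ℕ) → Fin (n + 1) → TV n j
  | 0, _, _ => ()
  | n + 1, j, k => Fin.cases none (fun i => some (0, spine n j i)) k

theorem spine_adj : ∀ (n j : ℕ) (a b : Fin (n + 1)), a ≠ b →
    (Tgraph n j).Adj (spine n j a) (spine n j b)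
  | 0, _, a, b, h => (h (Subsingleton.elim (α := Fin 1) a b)).elim
  | n + 1, j, a, b, h => by
      cases a using Fin.cases <;> cases b using Fin.cases
      · exact (h rfl).elim
      · exact Tgraph_succ_adj_none_some _
      · exact Tgraph_succ_adj_some_none _
      · exact (Tgraph_succ_adj_some_some _ _).mpr
          ⟨rfl, spine_adj n j _ _ fun hab => h (congrArg Fin.succ hab)⟩

def spineCopy (n j : ℕ) : Copy (⊤ : SimpleGraph (Fin (n + 1))) (Tgraph n j) :=
  Hom.toCopy ⟨spine n j, spine_adj n j _ _⟩ (Hom.injective_of_top_hom _)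

theorem isNClique_spine (n j : ℕ) :
    (Tgraph n j).IsNClique (n + 1) (Finset.univ.map (spineCopy n j).toEmbedding) := by
  simpa using isNClique_map_copy_top (spineCopy n j)

end TV

/-- The tree-depth of `T(i, j)` equals `i` (here `i = n + 1`). -/
theorem treeDepth_Tgraph (n j : ℕ) : treeDepth (Tgraph n j) = n + 1 :=
  treeDepth_eq_of_isNClique (TV.isNClique_spine n j) (TV.IsAncestor n j)
    (TV.isChain_ancestors n j) (TV.isAncestor_or_isAncestor_of_adj n j)
    fun _ ht => ht.card_le_of_rank (TV.depth n j) (TV.depth_lt_depth n j)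
end
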